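/- arXiv:1905.04853 — 3 statements merged into one kernel-verified Lean document; each statement's English description precedes it below -/
import Mathlib

section
/- For a matching M in a 2-layered bipartite graph, if X and Y are (the edge sets of) two distinct connected components of the intersection graph H[M] (vertices are edges of M, adjacency is crossing), then X and Y are comparable under ≺: either every edge of X precedes every edge of Y, or vice versa. Hence the set of connected components forms a chain under ≺. -/
/-!
Two vertices in different components of `H[M]` are distinct, non-crossing edges of a matching,
so one precedes the other. For a fixed edge `y` outside the component of `a`, the side of `y` on
which an edge lies cannot change when passing to a crossing neighbour that itself neither crosses
nor equals `y`; hence it is constant along walks, i.e. on the whole component. Applying this once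
in each component transports `u ≺ v` to `x ≺ y` for all `x ~ u`, `y ~ v`.
-/

def inter (e f : ℕ × ℕ) : Prop :=
  (e.1 < f.1 ∧ f.2 < e.2) ∨ (f.1 < e.1 ∧ e.2 < f.2)

def eprec (e f : ℕ × ℕ) : Prop := e.1 < f.1 ∧ e.2 < f.2

def IsMatching (M : Set (ℕ × ℕ)) : Prop :=
  ∀ e ∈ M, ∀ f ∈ M, e ≠ f → e.1 ≠ f.1 ∧ e.2 ≠ f.2

def HG (M : Set (ℕ × ℕ)) : SimpleGraph M where
  Adj e f := inter e.1 f.1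
  symm := by constructor; intro a b h; unfold inter at h ⊢; omega
  loopless := by constructor; intro a h; unfold inter at h; omega

theorem eprec_or_eprec_of_not_inter {e f : ℕ × ℕ} (h₁ : e.1 ≠ f.1) (h₂ : e.2 ≠ f.2)
    (hef : ¬ inter e f) : eprec e f ∨ eprec f e := by
  unfold inter at hef; unfold eprec; omega

theorem eprec_right_of_inter {a b y : ℕ × ℕ} (hab : inter a b) (hby : ¬ inter b y)
    (h₁ : b.1 ≠ y.1) (h₂ : b.2 ≠ y.2) (hay : eprec a y) : eprec b y := by
  unfold inter at hab hby; unfold eprec at hay ⊢; omega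

theorem eprec_left_of_inter {a b y : ℕ × ℕ} (hab : inter a b) (hby : ¬ inter y b)
    (h₁ : y.1 ≠ b.1) (h₂ : y.2 ≠ b.2) (hya : eprec y a) : eprec y b := by
  unfold inter at hab hby; unfold eprec at hya ⊢; omega

namespace IsMatching

variable {M : Set (ℕ × ℕ)} (hM : IsMatching M)
include hM

theorem coord_ne {e f : M} (hef : e ≠ f) : e.1.1 ≠ f.1.1 ∧ e.1.2 ≠ f.1.2 :=
  hM e.1 e.2 f.1 f.2 (Subtype.coe_injective.ne hef)

theorem eprec_or_eprec_of_connectedComponentMk_ne {e f : M}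
    (hef : (HG M).connectedComponentMk e ≠ (HG M).connectedComponentMk f) :
    eprec e.1 f.1 ∨ eprec f.1 e.1 :=
  have hne := hM.coord_ne (fun h => hef (congrArg _ h))
  eprec_or_eprec_of_not_inter hne.1 hne.2
    fun hadj => hef (SimpleGraph.ConnectedComponent.connectedComponentMk_eq_of_adj hadj)

theorem eprec_right_of_reachable {a b y : M} (hab : (HG M).Reachable a b)
    (hy : (HG M).connectedComponentMk a ≠ (HG M).connectedComponentMk y)
    (hay : eprec a.1 y.1) : eprec b.1 y.1 := by
  obtain ⟨p⟩ := hab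
  induction p with
  | nil => exact hay
  | @cons a c b hac _ ih =>
    have hcy : (HG M).connectedComponentMk c ≠ (HG M).connectedComponentMk y := by
      rwa [← SimpleGraph.ConnectedComponent.connectedComponentMk_eq_of_adj hac]
    have hne := hM.coord_ne fun h => hcy (congrArg _ h)
    refine ih hcy (eprec_right_of_inter hac ?_ hne.1 hne.2 hay)
    exact fun hadj => hcy (SimpleGraph.ConnectedComponent.connectedComponentMk_eq_of_adj hadj)

theorem eprec_left_of_reachable {a b y : M} (hab : (HG M).Reachable a b)
    (hy : (HG M).connectedComponentMk y ≠ (HG M).connectedComponentMk a)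
    (hya : eprec y.1 a.1) : eprec y.1 b.1 := by
  obtain ⟨p⟩ := hab
  induction p with
  | nil => exact hya
  | @cons a c b hac _ ih =>
    have hyc : (HG M).connectedComponentMk y ≠ (HG M).connectedComponentMk c := by
      rwa [← SimpleGraph.ConnectedComponent.connectedComponentMk_eq_of_adj hac]
    have hne := hM.coord_ne fun h => hyc (congrArg _ h)
    refine ih hyc (eprec_left_of_inter hac ?_ hne.1 hne.2 hya)
    exact fun hadj => hyc (SimpleGraph.ConnectedComponent.connectedComponentMk_eq_of_adj hadj)

theorem eprec_of_connectedComponentMk_eq {u v x y : M}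
    (huv : (HG M).connectedComponentMk u ≠ (HG M).connectedComponentMk v)
    (hx : (HG M).connectedComponentMk x = (HG M).connectedComponentMk u)
    (hy : (HG M).connectedComponentMk y = (HG M).connectedComponentMk v)
    (h : eprec u.1 v.1) : eprec x.1 y.1 := by
  have hxv : eprec x.1 v.1 :=
    hM.eprec_right_of_reachable (SimpleGraph.ConnectedComponent.exact hx.symm) huv h
  exact hM.eprec_left_of_reachable (SimpleGraph.ConnectedComponent.exact hy.symm)
    (hx.trans_ne huv) hxv

end IsMatching

theorem components_comparable (M : Set (ℕ × ℕ)) (hM : IsMatching M)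
    (u v : M)
    (huv : (HG M).connectedComponentMk u ≠ (HG M).connectedComponentMk v) :
    (∀ x y : M, (HG M).connectedComponentMk x = (HG M).connectedComponentMk u →
      (HG M).connectedComponentMk y = (HG M).connectedComponentMk v → eprec x.1 y.1) ∨
    (∀ x y : M, (HG M).connectedComponentMk x = (HG M).connectedComponentMk u →
      (HG M).connectedComponentMk y = (HG M).connectedComponentMk v → eprec y.1 x.1) := by
  rcases hM.eprec_or_eprec_of_connectedComponentMk_ne huv with h | h
  · exact Or.inl fun x y hx hy => hM.eprec_of_connectedComponentMk_eq huv hx hy h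
  · exact Or.inr fun x y hx hy => hM.eprec_of_connectedComponentMk_eq huv.symm hy hx h
end

section
/- Let M = {e_1, …, e_{2d}} (d ≥ 2) be a matching whose intersection graph is the path e_1 — ⋯ — e_{2d} with e_1 left of e_{2d} on the upper line. If e_1 is to the left of e_2 on the upper line, then for every t ∈ [d], e_{2t−1} is to the left of e_{2t} on the upper line (all consecutive crossing pairs are 'upper links' with consistent orientation). -/
/-!
Along an induced path of crossings the upper-line orientation alternates: if `a` crosses `b`,
`b` crosses `c` and `a` misses `c`, then `a` and `c` lie on the same side of `b` on the upper line
(otherwise `a` would cross `c`). So the orientation of the pair `e i`, `e (i+1)` flips at every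
step, and the pairs `e (2k+1)`, `e (2k+2)` all share the orientation of `e 1`, `e 2`.
-/

theorem inter.fst_ne {a b : ℕ × ℕ} (h : inter a b) : a.1 ≠ b.1 := by
  unfold inter at h
  omega

theorem inter.fst_lt_iff_of_not_inter {a b c : ℕ × ℕ} (hab : inter a b) (hbc : inter b c)
    (hac : ¬ inter a c) : a.1 < b.1 ↔ c.1 < b.1 := by
  unfold inter at hab hbc hac
  omega

def IsInducedCrossingPath (n : ℕ) (e : ℕ → ℕ × ℕ) : Prop :=
  ∀ s t, 1 ≤ s → s ≤ n → 1 ≤ t → t ≤ n → (inter (e s) (e t) ↔ (s + 1 = t ∨ t + 1 = s))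

namespace IsInducedCrossingPath

variable {n : ℕ} {e : ℕ → ℕ × ℕ}

theorem fst_lt_fst_succ_iff (hpath : IsInducedCrossingPath n e) {i : ℕ} (hi : 1 ≤ i)
    (hin : i + 2 ≤ n) :
    (e i).1 < (e (i + 1)).1 ↔ (e (i + 2)).1 < (e (i + 1)).1 :=
  inter.fst_lt_iff_of_not_inter
    ((hpath i (i + 1) hi (by omega) (by omega) (by omega)).2 (Or.inl rfl))
    ((hpath (i + 1) (i + 2) (by omega) (by omega) (by omega) hin).2 (Or.inl rfl))
    (fun h => by have := (hpath i (i + 2) hi (by omega) (by omega) hin).1 h; omega)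

theorem fst_lt_fst_succ_add_two (hpath : IsInducedCrossingPath n e) {i : ℕ} (hi : 1 ≤ i)
    (hin : i + 3 ≤ n) (h : (e i).1 < (e (i + 1)).1) : (e (i + 2)).1 < (e (i + 3)).1 := by
  have hleft : (e (i + 2)).1 < (e (i + 1)).1 := (hpath.fst_lt_fst_succ_iff hi (by omega)).1 h
  have hnot : ¬ (e (i + 3)).1 < (e (i + 2)).1 := fun h' =>
    lt_asymm hleft ((hpath.fst_lt_fst_succ_iff (i := i + 1) (by omega) (by omega)).2 h')
  have hne : (e (i + 2)).1 ≠ (e (i + 3)).1 :=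
    inter.fst_ne ((hpath (i + 2) (i + 3) (by omega) (by omega) (by omega) hin).2 (Or.inl rfl))
  omega

theorem fst_odd_lt_fst_even (hpath : IsInducedCrossingPath n e) (hfirst : (e 1).1 < (e 2).1) :
    ∀ k, 2 * k + 2 ≤ n → (e (2 * k + 1)).1 < (e (2 * k + 2)).1
  | 0, _ => hfirst
  | k + 1, hk =>
    hpath.fst_lt_fst_succ_add_two (by omega) (by omega)
      (hpath.fst_odd_lt_fst_even hfirst k (by omega))

end IsInducedCrossingPath

theorem even_path_upper_links_consistent_general (d : ℕ) (e : ℕ → ℕ × ℕ)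
    (hpath : ∀ s t, 1 ≤ s → s ≤ 2 * d → 1 ≤ t → t ≤ 2 * d →
      (inter (e s) (e t) ↔ (s + 1 = t ∨ t + 1 = s)))
    (hfirst : (e 1).1 < (e 2).1) :
    ∀ t, 1 ≤ t → t ≤ d → (e (2 * t - 1)).1 < (e (2 * t)).1 := by
  intro t ht htd
  obtain ⟨k, rfl⟩ : ∃ k, t = k + 1 := ⟨t - 1, by omega⟩
  have h := IsInducedCrossingPath.fst_odd_lt_fst_even hpath hfirst k (by omega)
  rwa [show 2 * (k + 1) - 1 = 2 * k + 1 by omega, show 2 * (k + 1) = 2 * k + 2 by omega]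

theorem even_path_upper_links_consistent (d : ℕ) (hd : 2 ≤ d) (e : ℕ → ℕ × ℕ)
    (hmatch : ∀ s t, 1 ≤ s → s ≤ 2 * d → 1 ≤ t → t ≤ 2 * d → s ≠ t →
      (e s).1 ≠ (e t).1 ∧ (e s).2 ≠ (e t).2)
    (hpath : ∀ s t, 1 ≤ s → s ≤ 2 * d → 1 ≤ t → t ≤ 2 * d →
      (inter (e s) (e t) ↔ (s + 1 = t ∨ t + 1 = s)))
    (hleft : (e 1).1 < (e (2 * d)).1)
    (hfirst : (e 1).1 < (e 2).1) :
    ∀ t, 1 ≤ t → t ≤ d → (e (2 * t - 1)).1 < (e (2 * t)).1 :=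
  even_path_upper_links_consistent_general d e hpath hfirst
end

section
/- Define μ_𝒯(T_s) as the maximum weight of a chain in (𝒯, ≺) whose maximum element is T_s, and μ_γ(i,q) as the maximum weight of a chain all of whose trapezoids are contained in A[i] ∪ B[q] and whose rightmost trapezoid T satisfies γ_B(T) = q (with μ_γ(0,q)=0). Then μ_𝒯(T_s) = ω(T_s) + max{ μ_γ(λ_A(T_s)−1, q) : q ∈ [λ_B(T_s)−1] } (interpreting the maximum over the empty set as 0). -/
structure Trap where
  lA : ℕ
  gA : ℕ
  lB : ℕ
  gB : ℕ
  hA : lA ≤ gA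
  hB : lB ≤ gB

def tprec (T T' : Trap) : Prop := T.gA < T'.lA ∧ T.gB < T'.lB

def contained (T : Trap) (i q : ℕ) : Prop :=
  1 ≤ T.lA ∧ T.gA ≤ i ∧ 1 ≤ T.lB ∧ T.gB ≤ q

noncomputable def muT (𝒯 : Finset Trap) (ω : Trap → NNReal) (Ts : Trap) : NNReal :=
  sSup {x | ∃ C : Finset Trap, ↑C ⊆ (𝒯 : Set Trap) ∧ IsChain tprec (↑C : Set Trap) ∧
    Ts ∈ C ∧ (∀ T ∈ C, T ≠ Ts → tprec T Ts) ∧ x = ∑ T ∈ C, ω T}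

noncomputable def muGamma (𝒯 : Finset Trap) (ω : Trap → NNReal) (i q : ℕ) : NNReal :=
  sSup {x | ∃ C : Finset Trap, ↑C ⊆ (𝒯 : Set Trap) ∧ IsChain tprec (↑C : Set Trap) ∧
    (∀ T ∈ C, contained T i q) ∧
    (∃ T ∈ C, T.gB = q ∧ ∀ T' ∈ C, T' ≠ T → tprec T' T) ∧ x = ∑ T ∈ C, ω T}


/-!
Split a chain with maximum `Tₛ` into `Tₛ` and the rest. The rest is empty, or it is a chain
whose trapezoids all end before `Tₛ` starts, i.e. lie in `A[λ_A(Tₛ) - 1] ∪ B[q]` where `q` is the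
largest `γ_B` among them, attained at its `≺`-maximum; this gives `≤`. Conversely, any chain
contained in `A[λ_A(Tₛ) - 1] ∪ B[q]` with `q < λ_B(Tₛ)` lies entirely `≺`-below `Tₛ`, so adding
`Tₛ` to it gives a chain with maximum `Tₛ`; this gives `≥`.
-/

open Finset

lemma Set.finite_of_forall_eq_sum_subset {α M : Type*} [AddCommMonoid M] (s : Finset α)
    (f : α → M) {S : Set M} (h : ∀ x ∈ S, ∃ C : Finset α, ↑C ⊆ (s : Set α) ∧ x = ∑ a ∈ C, f a) :
    S.Finite := by
  refine (s.powerset.finite_toSet.image fun C => ∑ a ∈ C, f a).subset fun x hx => ?_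
  obtain ⟨C, hC, rfl⟩ := h x hx
  exact ⟨C, Finset.mem_coe.mpr (Finset.mem_powerset.mpr (Finset.coe_subset.mp hC)), rfl⟩

lemma IsChain.tprec_of_gB_le {C : Set Trap} (hC : IsChain tprec C) {T T' : Trap} (hT : T ∈ C)
    (hT' : T' ∈ C) (hne : T ≠ T') (hle : T.gB ≤ T'.gB) : tprec T T' := by
  refine (hC hT hT' hne).resolve_right fun h => ?_
  have := h.2
  have := T.hB
  omega

lemma tprec_of_contained {T Ts : Trap} {q : ℕ} (hT : contained T (Ts.lA - 1) q) (hq : q < Ts.lB) :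
    tprec T Ts := by
  obtain ⟨hlA, hgA, -, hgB⟩ := hT
  have := T.hA
  exact ⟨by omega, by omega⟩

section

variable {𝒯 : Finset Trap} {ω : Trap → NNReal}

lemma le_muT {Ts : Trap} {C : Finset Trap} (hC𝒯 : ↑C ⊆ (𝒯 : Set Trap))
    (hC : IsChain tprec (↑C : Set Trap)) (hTs : Ts ∈ C) (hmax : ∀ T ∈ C, T ≠ Ts → tprec T Ts) :
    ∑ T ∈ C, ω T ≤ muT 𝒯 ω Ts :=
  le_csSup (Set.finite_of_forall_eq_sum_subset 𝒯 ω (by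
    rintro x ⟨C, hC𝒯, -, -, -, rfl⟩; exact ⟨C, hC𝒯, rfl⟩)).bddAbove ⟨C, hC𝒯, hC, hTs, hmax, rfl⟩

lemma muT_le {Ts : Trap} {x : NNReal}
    (h : ∀ C : Finset Trap, ↑C ⊆ (𝒯 : Set Trap) → IsChain tprec (↑C : Set Trap) → Ts ∈ C →
      (∀ T ∈ C, T ≠ Ts → tprec T Ts) → ∑ T ∈ C, ω T ≤ x) :
    muT 𝒯 ω Ts ≤ x :=
  csSup_le' <| by rintro _ ⟨C, hC𝒯, hC, hTs, hmax, rfl⟩; exact h C hC𝒯 hC hTs hmax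

lemma weight_le_muT {Ts : Trap} (hTs : Ts ∈ 𝒯) : ω Ts ≤ muT 𝒯 ω Ts := by
  simpa using le_muT (𝒯 := 𝒯) (ω := ω) (C := {Ts}) (by simpa using hTs)
    (Set.Subsingleton.isChain (by simp)) (mem_singleton_self Ts) (by simp)

lemma le_muGamma {i q : ℕ} {C : Finset Trap} (hC𝒯 : ↑C ⊆ (𝒯 : Set Trap))
    (hC : IsChain tprec (↑C : Set Trap)) (hcont : ∀ T ∈ C, contained T i q)
    (hmax : ∃ T ∈ C, T.gB = q ∧ ∀ T' ∈ C, T' ≠ T → tprec T' T) :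
    ∑ T ∈ C, ω T ≤ muGamma 𝒯 ω i q :=
  le_csSup (Set.finite_of_forall_eq_sum_subset 𝒯 ω (by
    rintro x ⟨C, hC𝒯, -, -, -, rfl⟩; exact ⟨C, hC𝒯, rfl⟩)).bddAbove ⟨C, hC𝒯, hC, hcont, hmax, rfl⟩

lemma exists_sum_eq_muGamma {i q : ℕ} (h : muGamma 𝒯 ω i q ≠ 0) :
    ∃ C : Finset Trap, ↑C ⊆ (𝒯 : Set Trap) ∧ IsChain tprec (↑C : Set Trap) ∧
      (∀ T ∈ C, contained T i q) ∧ ∑ T ∈ C, ω T = muGamma 𝒯 ω i q := by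
  obtain ⟨x, hx, -⟩ := exists_lt_of_lt_csSup' (pos_iff_ne_zero.mpr h)
  obtain ⟨C, hC𝒯, hC, hcont, -, hsum⟩ := Set.Nonempty.csSup_mem ⟨x, hx⟩
    (Set.finite_of_forall_eq_sum_subset 𝒯 ω (by
      rintro x ⟨C, hC𝒯, -, -, -, rfl⟩; exact ⟨C, hC𝒯, rfl⟩))
  exact ⟨C, hC𝒯, hC, hcont, hsum.symm⟩

lemma add_muGamma_le_muT {Ts : Trap} (hTs : Ts ∈ 𝒯) {q : ℕ} (hq : q < Ts.lB) :
    ω Ts + muGamma 𝒯 ω (Ts.lA - 1) q ≤ muT 𝒯 ω Ts := by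
  classical
  by_cases hzero : muGamma 𝒯 ω (Ts.lA - 1) q = 0
  · simpa [hzero] using weight_le_muT hTs
  obtain ⟨C, hC𝒯, hC, hcont, hsum⟩ := exists_sum_eq_muGamma hzero
  have hbelow : ∀ T ∈ C, tprec T Ts := fun T hT => tprec_of_contained (hcont T hT) hq
  have hTsC : Ts ∉ C := fun h => (hbelow Ts h).1.not_ge Ts.hA
  rw [← hsum, ← sum_insert hTsC]
  refine le_muT ?_ ?_ (mem_insert_self Ts C) ?_
  · rw [coe_insert]
    exact Set.insert_subset hTs hC𝒯
  · rw [coe_insert]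
    exact hC.insert fun T hT _ => Or.inr (hbelow T hT)
  · intro T hT hne
    exact hbelow T ((mem_insert.mp hT).resolve_left hne)

lemma sum_erase_le_muGamma [DecidableEq Trap] (hb : ∀ T ∈ 𝒯, 1 ≤ T.lA ∧ 1 ≤ T.lB) {Ts : Trap}
    {C : Finset Trap} (hC𝒯 : ↑C ⊆ (𝒯 : Set Trap)) (hC : IsChain tprec (↑C : Set Trap))
    (hmax : ∀ T ∈ C, T ≠ Ts → tprec T Ts) (hne : (C.erase Ts).Nonempty) :
    ∃ q, (1 ≤ q ∧ q ≤ Ts.lB - 1) ∧ ∑ T ∈ C.erase Ts, ω T ≤ muGamma 𝒯 ω (Ts.lA - 1) q := by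
  have hbelow : ∀ T ∈ C.erase Ts, tprec T Ts := fun T hT =>
    hmax T (mem_of_mem_erase hT) (ne_of_mem_erase hT)
  have hsub : (↑(C.erase Ts) : Set Trap) ⊆ ↑C := coe_subset.mpr (erase_subset Ts C)
  obtain ⟨Tm, hTm, hTm_top⟩ := exists_max_image (C.erase Ts) Trap.gB hne
  have hTm_max : ∀ T ∈ C.erase Ts, T ≠ Tm → tprec T Tm := fun T hT hne =>
    hC.tprec_of_gB_le (hsub hT) (hsub hTm) hne (hTm_top T hT)
  have hcont : ∀ T ∈ C.erase Ts, contained T (Ts.lA - 1) Tm.gB := fun T hT => by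
    obtain ⟨hlA, hlB⟩ := hb T (hC𝒯 (hsub hT))
    have := (hbelow T hT).1
    exact ⟨hlA, by omega, hlB, hTm_top T hT⟩
  have hTm_one : 1 ≤ Tm.gB := (hcont Tm hTm).2.2.1.trans Tm.hB
  have hTm_lt : Tm.gB < Ts.lB := (hbelow Tm hTm).2
  exact ⟨Tm.gB, ⟨hTm_one, by omega⟩,
    le_muGamma (hsub.trans hC𝒯) (hC.mono hsub) hcont ⟨Tm, hTm, rfl, hTm_max⟩⟩

end

theorem muT_recurrence (𝒯 : Finset Trap) (ω : Trap → NNReal)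
    (hb : ∀ T ∈ 𝒯, 1 ≤ T.lA ∧ 1 ≤ T.lB)
    (Ts : Trap) (hTs : Ts ∈ 𝒯) :
    muT 𝒯 ω Ts =
      ω Ts + sSup ({0} ∪ (fun q => muGamma 𝒯 ω (Ts.lA - 1) q) ''
        {q | 1 ≤ q ∧ q ≤ Ts.lB - 1}) := by
  classical
  set U := ({0} : Set NNReal) ∪ (fun q => muGamma 𝒯 ω (Ts.lA - 1) q) ''
    {q | 1 ≤ q ∧ q ≤ Ts.lB - 1}
  have hU : U.Finite := (Set.finite_singleton 0).union ((Set.finite_Icc 1 (Ts.lB - 1)).image _)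
  refine le_antisymm (muT_le fun C hC𝒯 hC hTsC hmax => ?_) ?_
  · rw [← add_sum_erase C ω hTsC]
    gcongr
    obtain hempty | hne := (C.erase Ts).eq_empty_or_nonempty
    · simp [hempty]
    obtain ⟨q, hq, hle⟩ := sum_erase_le_muGamma hb hC𝒯 hC hmax hne
    exact hle.trans (le_csSup hU.bddAbove (Or.inr ⟨q, hq, rfl⟩))
  · obtain hzero | ⟨q, ⟨hq_one, hq_le⟩, hsup⟩ := (show U.Nonempty from ⟨0, Or.inl rfl⟩).csSup_mem hU
    · simpa [Set.mem_singleton_iff.mp hzero] using weight_le_muT hTs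
    · rw [← hsup]
      exact add_muGamma_le_muT hTs (by omega)
end
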